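/- Let (d_G)_G be a family assigning to every domain G ⊆ ℂⁿ (for every n ∈ ℕ) a function d_G : ℝ₊^G × G → ℝ₊. Assume (H): for all domains G ⊆ ℂⁿ, D ⊆ ℂᵐ, every holomorphic map F : G → D and every q : D → ℝ₊, d_D(q, F(z)) ≤ d_G(q ∘ F, z) for all z ∈ G; (M): for p, q : G → ℝ₊ with p ≤ q pointwise, d_G(q,·) ≤ d_G(p,·); and (E⁻): ∏_{μ∈E}[m_E(μ,λ)]^{p(μ)} ≤ d_E(p,λ) for all p : E → ℝ₊ and λ ∈ E. Then d_G^min(p, z) ≤ d_G(p, z) for every domain G ⊆ ℂⁿ, every p : G → ℝ₊ and every z ∈ G. -/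

import Mathlib

open Complex Set Filter Asymptotics
open scoped ENNReal

noncomputable section

/-- The open unit disc `E ⊆ ℂ`. -/
def discE : Set ℂ := {z : ℂ | ‖z‖ < 1}

/-- The Möbius function `m_E(a,z) = |(z-a)/(1 - conj a · z)|`. -/
def mE (a z : ℂ) : ℝ := ‖(z - a) / (1 - (starRingEnd ℂ) a * z)‖

/-- A domain: a nonempty open connected set. -/
def IsDom {V : Type*} [NormedAddCommGroup V] [NormedSpace ℂ V] (G : Set V) : Prop :=
  IsOpen G ∧ IsConnected G

variable {V W : Type*} [NormedAddCommGroup V] [NormedSpace ℂ V]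
  [NormedAddCommGroup W] [NormedSpace ℂ W]

/-- `ord_a f ≥ k` : `f(w) = O(‖w - a‖^k)` as `w → a`. -/
def OrdGE (f : V → ℂ) (a : V) (k : ℕ) : Prop :=
  f =O[nhds a] fun w => ‖w - a‖ ^ k

/-- The generalized Möbius function `m_G(p, z)` with integer weights `p`. -/
def mFun (G : Set V) (p : V → ℕ) (z : V) : ℝ :=
  sSup {r : ℝ | ∃ f : V → ℂ, DifferentiableOn ℂ f G ∧ MapsTo f G discE ∧
    (∀ a ∈ G, OrdGE f a (p a)) ∧ r = ‖f z‖}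

/-- The Lempert function `k̃*_G(a,z)`. -/
def lemp (G : Set V) (a z : V) : ℝ :=
  sInf {r : ℝ | ∃ μ ∈ discE, ∃ φ : ℂ → V, DifferentiableOn ℂ φ discE ∧
    MapsTo φ discE G ∧ φ 0 = a ∧ φ μ = z ∧ r = ‖μ‖}

/-- `d_G^max(p,z) = inf { k̃*_G(a,z) ^ p(a) : a ∈ G }` (real exponents). -/
def dMax (G : Set V) (p : V → ℝ) (z : V) : ℝ :=
  sInf {r : ℝ | ∃ a ∈ G, r = lemp G a z ^ p a}

/-- Possibly infinite product `∏_{a ∈ A} h a`, defined as the infimum of finite subproducts. -/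
def infProd {α : Type*} (A : Set α) (h : α → ℝ) : ℝ :=
  sInf {r : ℝ | ∃ B : Finset α, ↑B ⊆ A ∧ r = ∏ a ∈ B, h a}

/-- `sup p (f⁻¹(μ))`, the supremum of the weights on the fiber over `μ`, in `[0,∞]`. -/
def fiberSup (G : Set V) (p : V → ℝ) (f : V → ℂ) (μ : ℂ) : ℝ≥0∞ :=
  ⨆ a ∈ {a ∈ G | f a = μ}, ENNReal.ofReal (p a)

/-- The factor `|μ| ^ (sup p (f⁻¹(μ)))`, equal to `0` when the exponent is infinite. -/
def minTerm (G : Set V) (p : V → ℝ) (f : V → ℂ) (μ : ℂ) : ℝ :=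
  if fiberSup G p f μ = ⊤ then 0 else ‖μ‖ ^ (fiberSup G p f μ).toReal

/-- `d_G^min(p,z) = sup { ∏_{μ ∈ f(G)} |μ| ^ (sup p (f⁻¹(μ))) : f ∈ O(G,E), f(z) = 0 }`. -/
def dMin (G : Set V) (p : V → ℝ) (z : V) : ℝ :=
  sSup {r : ℝ | ∃ f : V → ℂ, DifferentiableOn ℂ f G ∧ MapsTo f G discE ∧
    f z = 0 ∧ r = infProd (f '' G) (minTerm G p f)}

/-- The unit disc viewed as a domain in `ℂ¹ = (Fin 1 → ℂ)`. -/
def E1 : Set (Fin 1 → ℂ) := {z : Fin 1 → ℂ | ‖z 0‖ < 1}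

open Cardinal in
lemma exists_inj (n : ℕ) : ∃ ι : (Fin n → ℂ) → ℂ,
    Function.Injective ι ∧ ∀ a, 2 ≤ ‖ι a‖ := by
  have h1 : #(Fin n → ℂ) ≤ #ℝ := by
    rw [Cardinal.mk_real]
    calc #(Fin n → ℂ) = #ℂ ^ (n : Cardinal) := by
          rw [← Cardinal.power_def, Cardinal.mk_fin]
        _ = 𝔠 ^ (n : Cardinal) := by rw [mk_complex]
        _ ≤ 𝔠 := by
          rw [Cardinal.power_natCast]
          exact Cardinal.power_nat_le Cardinal.aleph0_le_continuum
  obtain ⟨φ⟩ := Cardinal.le_def _ _ |>.mp h1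
  refine ⟨fun a => 3 + (φ a : ℂ) * Complex.I, ?_, ?_⟩
  · intro a b h
    apply φ.injective
    have := congrArg Complex.im h
    simpa using this
  · intro a
    have h1 : |(3 + (φ a : ℂ) * Complex.I).re| ≤ ‖3 + (φ a : ℂ) * Complex.I‖ :=
      Complex.abs_re_le_norm _
    have h2 : (3 + (φ a : ℂ) * Complex.I).re = 3 := by simp
    rw [h2, abs_of_pos (by norm_num : (0:ℝ)<3)] at h1
    linarith

lemma isDom_E1 : IsDom E1 := by
  constructor
  · have hE : E1 = (fun z : Fin 1 → ℂ => z 0) ⁻¹' (Metric.ball 0 1) := by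
      ext w; simp [E1, Complex.dist_eq]
    rw [hE]; exact Metric.isOpen_ball.preimage (continuous_apply 0)
  · refine ⟨⟨0, by simp [E1]⟩, ?_⟩
    have hconv : Convex ℝ E1 := by
      intro x hx y hy a b ha hb hab
      simp only [E1, mem_setOf_eq] at hx hy ⊢
      have : (a • x + b • y) 0 = a • x 0 + b • y 0 := by simp
      rw [this]
      calc ‖a • x 0 + b • y 0‖
          ≤ ‖a • x 0‖ + ‖b • y 0‖ := norm_add_le _ _
        _ = a * ‖x 0‖ + b * ‖y 0‖ := by
            simp [norm_smul, Real.norm_eq_abs, _root_.abs_of_nonneg ha, _root_.abs_of_nonneg hb]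
        _ < a * 1 + b * 1 := by
            rcases ha.lt_or_eq with ha' | ha'
            · rcases hb.lt_or_eq with hb' | hb'
              · exact add_lt_add (by nlinarith) (by nlinarith)
              · simp [← hb']; nlinarith
            · simp [← ha']
              rcases hb.lt_or_eq with hb' | hb'
              · nlinarith
              · exfalso; rw [← ha', ← hb'] at hab; simp at hab
        _ = 1 := by rw [mul_one, mul_one, hab]
    exact hconv.isPreconnected

/-- a family satisfying (H), (M) and (E⁻) dominates `d^min`. -/
theorem stmt_2
    (d : (n : ℕ) → Set (Fin n → ℂ) → ((Fin n → ℂ) → ℝ) → (Fin n → ℂ) → ℝ)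
    (hnonneg : ∀ (n : ℕ) (G : Set (Fin n → ℂ)) (p : (Fin n → ℂ) → ℝ) (z : Fin n → ℂ),
      0 ≤ d n G p z)
    (hH : ∀ (n m : ℕ) (G : Set (Fin n → ℂ)) (D : Set (Fin m → ℂ)), IsDom G → IsDom D →
      ∀ F : (Fin n → ℂ) → (Fin m → ℂ), DifferentiableOn ℂ F G → MapsTo F G D →
      ∀ q : (Fin m → ℂ) → ℝ, (∀ b, 0 ≤ q b) →
      ∀ z ∈ G, d m D q (F z) ≤ d n G (q ∘ F) z)
    (hM : ∀ (n : ℕ) (G : Set (Fin n → ℂ)), IsDom G →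
      ∀ p q : (Fin n → ℂ) → ℝ, (∀ a, 0 ≤ p a) → (∀ a, p a ≤ q a) →
      ∀ z ∈ G, d n G q z ≤ d n G p z)
    (hEminus : ∀ p : (Fin 1 → ℂ) → ℝ, (∀ a, 0 ≤ p a) → ∀ lam ∈ E1,
      infProd E1 (fun μ => mE (μ 0) (lam 0) ^ p μ) ≤ d 1 E1 p lam)
    (n : ℕ) (G : Set (Fin n → ℂ)) (hG : IsDom G)
    (p : (Fin n → ℂ) → ℝ) (hp : ∀ a, 0 ≤ p a) (z : Fin n → ℂ) (hz : z ∈ G) :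
    dMin G p z ≤ d n G p z := by
  classical
  refine Real.sSup_le ?_ (hnonneg n G p z)
  rintro x ⟨f, hfd, hfm, hfz, rfl⟩
  have hmt : ∀ μ, 0 ≤ minTerm G p f μ := by
    intro μ; unfold minTerm; split
    · exact le_refl 0
    · exact Real.rpow_nonneg (norm_nonneg _) _
  have hbdd : BddBelow {r : ℝ | ∃ B : Finset ℂ, ↑B ⊆ f '' G ∧ r = ∏ a ∈ B, minTerm G p f a} := by
    refine ⟨0, ?_⟩
    rintro r ⟨B, hB, rfl⟩
    exact Finset.prod_nonneg fun μ _ => hmt μ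
  by_cases hfin : ∀ ν ∈ f '' G, fiberSup G p f ν ≠ ⊤
  case neg =>
    push_neg at hfin
    obtain ⟨ν, hν, htop⟩ := hfin
    have h0 : infProd (f '' G) (minTerm G p f) ≤ 0 := by
      refine csInf_le hbdd ⟨{ν}, by simpa using hν, ?_⟩
      simp [minTerm, htop]
    exact h0.trans (hnonneg n G p z)
  case pos =>
    obtain ⟨ι, hιinj, hιabs⟩ := exists_inj n
    set e : ℂ → ℝ := fun ν => (fiberSup G p f ν).toReal with he
    set pOut : ℂ → ℝ := fun ν => if h : ∃ a, a ∉ G ∧ ι a = ν then p h.choose else 0 with hpOut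
    have hpOut0 : ∀ ν, 0 ≤ pOut ν := by
      intro ν; rw [hpOut]; dsimp only; split
      · exact hp _
      · exact le_refl 0
    set q : (Fin 1 → ℂ) → ℝ := fun μ => max (e (μ 0)) (pOut (μ 0)) with hq
    have hq0 : ∀ μ, 0 ≤ q μ := fun μ =>
      le_trans ENNReal.toReal_nonneg (le_max_left _ _)
    set f' : (Fin n → ℂ) → ℂ := fun a => if a ∈ G then f a else ι a with hf'
    set F : (Fin n → ℂ) → (Fin 1 → ℂ) := fun a _ => f' a with hF
    have hf'G : ∀ a ∈ G, f' a = f a := fun a ha => if_pos ha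
    have hFz0 : F z 0 = 0 := by rw [hF]; dsimp only; rw [hf'G z hz, hfz]
    have hFdiff : DifferentiableOn ℂ F G := by
      apply differentiableOn_pi.mpr
      intro i
      exact hfd.congr hf'G
    have hFmaps : MapsTo F G E1 := by
      intro a ha
      have : ‖f a‖ < 1 := hfm ha
      simpa [E1, hF, hf'G a ha] using this
    have hFzE1 : F z ∈ E1 := by simp [E1, hFz0]
    -- the fiber bound: for μ in the disc, pOut vanishes
    have hpOutdisc : ∀ ν : ℂ, ‖ν‖ < 1 → pOut ν = 0 := by
      intro ν hν; rw [hpOut]; dsimp only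
      split
      case isTrue h =>
        exfalso
        have := h.choose_spec.2
        have h2 := hιabs h.choose
        rw [this] at h2; linarith
      case isFalse => rfl
    -- Step 1 : infProd comparison
    have step1 : infProd (f '' G) (minTerm G p f)
        ≤ infProd E1 (fun μ => mE (μ 0) ((F z) 0) ^ q μ) := by
      refine le_csInf ⟨1, ∅, by simp⟩ ?_
      rintro r ⟨B, hB, rfl⟩
      refine csInf_le hbdd ?_
      refine ⟨(B.filter (fun μ => μ 0 ∈ f '' G)).image (fun μ => μ 0), ?_, ?_⟩
      · intro ν hν
        simp only [Finset.coe_image, Set.mem_image, Finset.mem_coe, Finset.mem_filter] at hν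
        obtain ⟨μ, ⟨_, hμ⟩, rfl⟩ := hν
        exact hμ
      · have heval_inj : Function.Injective (fun μ : Fin 1 → ℂ => μ 0) := by
          intro a b h
          funext i
          have : i = 0 := Subsingleton.elim _ _
          rw [this]; exact h
        rw [Finset.prod_image (fun a _ b _ h => heval_inj h)]
        have hterm : ∀ μ ∈ B, mE (μ 0) ((F z) 0) ^ q μ
            = ‖μ 0‖ ^ e (μ 0) := by
          intro μ hμ
          have hmem : ‖μ 0‖ < 1 := hB hμ
          have h1 : mE (μ 0) ((F z) 0) = ‖μ 0‖ := by
            rw [hFz0]; unfold mE; simp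
          have h2 : q μ = e (μ 0) := by
            rw [hq]; dsimp only
            rw [hpOutdisc _ hmem]
            exact max_eq_left ENNReal.toReal_nonneg
          rw [h1, h2]
        rw [Finset.prod_congr rfl hterm]
        rw [← Finset.prod_filter_mul_prod_filter_not B (fun μ => μ 0 ∈ f '' G)]
        have hone : ∏ μ ∈ B.filter (fun μ => ¬ μ 0 ∈ f '' G),
            ‖μ 0‖ ^ e (μ 0) = 1 := by
          refine Finset.prod_eq_one ?_
          intro μ hμ
          have hnotin : ¬ μ 0 ∈ f '' G := (Finset.mem_filter.mp hμ).2
          have hempty : {a ∈ G | f a = μ 0} = ∅ := by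
            ext a
            simp only [Set.mem_setOf_eq, Set.mem_empty_iff_false, iff_false, not_and]
            intro haG hfa
            exact hnotin ⟨a, haG, hfa⟩
          have h0 : fiberSup G p f (μ 0) = 0 := by
            unfold fiberSup
            rw [hempty]
            simp
          have : e (μ 0) = 0 := by rw [he]; dsimp only; rw [h0]; simp
          rw [this, Real.rpow_zero]
        rw [hone, mul_one]
        refine Finset.prod_congr rfl ?_
        intro μ hμ
        have hin : μ 0 ∈ f '' G := (Finset.mem_filter.mp hμ).2
        have hfib : fiberSup G p f (μ 0) ≠ ⊤ := hfin (μ 0) hin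
        unfold minTerm
        rw [if_neg hfib]
    -- Step 2-4 : chain
    have step2 := hEminus q hq0 (F z) hFzE1
    have step3 := hH n 1 G E1 hG isDom_E1 F hFdiff hFmaps q hq0 z hz
    have step4 : d n G (q ∘ F) z ≤ d n G p z := by
      refine hM n G hG p (q ∘ F) hp ?_ z hz
      intro a
      by_cases ha : a ∈ G
      · have hFa : F a 0 = f a := by rw [hF]; dsimp only; exact hf'G a ha
        have hfib : fiberSup G p f (f a) ≠ ⊤ := hfin (f a) ⟨a, ha, rfl⟩
        have hle : ENNReal.ofReal (p a) ≤ fiberSup G p f (f a) := by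
          unfold fiberSup
          exact le_iSup₂ (f := fun a _ => ENNReal.ofReal (p a)) a ⟨ha, rfl⟩
        have : p a ≤ e (f a) := by
          rw [he]; dsimp only
          calc p a = (ENNReal.ofReal (p a)).toReal := by rw [ENNReal.toReal_ofReal (hp a)]
            _ ≤ (fiberSup G p f (f a)).toReal := ENNReal.toReal_mono hfib hle
        calc p a ≤ e (f a) := this
          _ ≤ max (e (f a)) (pOut (f a)) := le_max_left _ _
          _ = q (F a) := by rw [hq]; dsimp only; rw [hFa]
      · have hFa : F a 0 = ι a := by rw [hF]; dsimp only; rw [hf']; dsimp only; rw [if_neg ha]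
        have hex : ∃ b, b ∉ G ∧ ι b = ι a := ⟨a, ha, rfl⟩
        have hchoose : pOut (ι a) = p a := by
          rw [hpOut]; dsimp only
          rw [dif_pos hex]
          have hspec := hex.choose_spec
          rw [hιinj hspec.2]
        calc p a = pOut (ι a) := hchoose.symm
          _ ≤ max (e (ι a)) (pOut (ι a)) := le_max_right _ _
          _ = q (F a) := by rw [hq]; dsimp only; rw [hFa]
    exact le_trans step1 (le_trans step2 (le_trans step3 step4))
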